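/- Let p > 0, C > 0, let f : ℝ^d → ℝ be convex and differentiable attaining its minimum f* at x*, and let h : ℝ^d → ℝ be convex and differentiable. Let X : [0, ∞) → ℝ^d be a curve, twice continuously differentiable on (0, ∞), satisfying the Nesterov flow d/dt ∇h(X_t + (t/p) Ẋ_t) = −C p t^{p−1} ∇f(X_t) for t > 0, and such that t ↦ X_t + (t/p) Ẋ_t extends continuously to t = 0 with value X_0. Then for all t > 0, f(X_t) − f* ≤ D_h(x*, X_0) / (C t^p). -/

import Mathlib

/-!
Along the flow, the energy `E_t = C t^p (f(X_t) − f(x*)) + D_h(x*, Z_t)`, where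
`Z_t = X_t + (t/p) Ẋ_t`, has derivative `C p t^(p−1) (f(X_t) − f(x*) + ⟪∇f(X_t), x* − X_t⟫)`,
which is `≤ 0` by convexity of `f`. A differentiable convex function on a finite-dimensional
space has a continuous gradient, so `E` is continuous at `0`, where it equals `D_h(x*, X_0)`.
Hence `C t^p (f(X_t) − f(x*)) ≤ E_t ≤ D_h(x*, X_0)`, as Bregman divergences of convex `h` are
nonnegative.
-/

open scoped RealInnerProductSpace
open Real Set

noncomputable section

/-- Bregman divergence `D_h(y, x) = h(y) − h(x) − ⟨∇h(x), y − x⟩`. -/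
def breg (d : ℕ) (h : EuclideanSpace ℝ (Fin d) → ℝ)
    (y x : EuclideanSpace ℝ (Fin d)) : ℝ :=
  h y - h x - ⟪gradient h x, y - x⟫

open Filter Topology

namespace ConvexOn

variable {E : Type*} [NormedAddCommGroup E] [InnerProductSpace ℝ E] [CompleteSpace E]
  {φ : E → ℝ} {g : E} {x : E}

theorem add_inner_le_of_hasGradientAt (hφ : ConvexOn ℝ univ φ) (hg : HasGradientAt φ g x)
    (y : E) : φ x + ⟪g, y - x⟫ ≤ φ y := by
  let ℓ : ℝ →ᵃ[ℝ] E := AffineMap.lineMap x y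
  have hline : HasDerivAt (φ ∘ ℓ) ⟪g, y - x⟫ 0 := by
    have hg' := hg.hasFDerivAt
    rw [← show ℓ 0 = x by simp [ℓ]] at hg'
    simpa using hg'.comp_hasDerivAt (0 : ℝ) AffineMap.hasDerivAt_lineMap
  have hconv : ConvexOn ℝ univ (φ ∘ ℓ) := by simpa using hφ.comp_affineMap ℓ
  have := hconv.le_slope_of_hasDerivAt (mem_univ 0) (mem_univ 1) one_pos hline
  simp only [slope_def_field, Function.comp_apply, AffineMap.lineMap_apply_one,
    AffineMap.lineMap_apply_zero, sub_zero, div_one, ℓ] at this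
  linarith

theorem _root_.HasGradientAt.eq_of_forall_add_inner_le {G : E} (hg : HasGradientAt φ g x)
    (hG : ∀ y, φ x + ⟪G, y - x⟫ ≤ φ y) : G = g := by
  have hmin : IsLocalMin (fun y => φ y - ⟪G, y⟫) x :=
    Eventually.of_forall fun y => by
      have := hG y
      rw [inner_sub_right] at this
      linarith
  have hzero := hmin.hasFDerivAt_eq_zero
    (hg.hasFDerivAt.sub (InnerProductSpace.toDual ℝ E G).hasFDerivAt)
  rw [← map_sub, LinearIsometryEquiv.map_eq_zero_iff, sub_eq_zero] at hzero
  exact hzero.symm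

theorem norm_le_of_hasGradientAt {B : ℝ} (hφ : ConvexOn ℝ univ φ) (hg : HasGradientAt φ g x)
    (hB : ∀ y ∈ Metric.closedBall x 1, |φ y| ≤ B) : ‖g‖ ≤ 2 * B := by
  have hBx := hB x (Metric.mem_closedBall_self zero_le_one)
  rcases eq_or_ne g 0 with rfl | hg0
  · linarith [norm_zero (E := E), abs_nonneg (φ x)]
  set u := ‖g‖⁻¹ • g
  have hu : ‖u‖ = 1 := by simp [u, norm_smul, hg0]
  have hgu : ⟪g, u⟫ = ‖g‖ := by
    rw [real_inner_smul_right, real_inner_self_eq_norm_sq]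
    field_simp
  have hBu := hB (x + u) (by simp [hu])
  have := hφ.add_inner_le_of_hasGradientAt hg (x + u)
  rw [add_sub_cancel_left, hgu] at this
  linarith [abs_le.1 hBx, abs_le.1 hBu]

theorem add_inner_le_of_mapClusterPt (hφ : ConvexOn ℝ univ φ) (hd : Differentiable ℝ φ)
    {G : E} (hG : MapClusterPt G (𝓝 x) (gradient φ)) (y : E) : φ x + ⟪G, y - x⟫ ≤ φ y := by
  have hgraph : MapClusterPt (x, G) (𝓝 x) (fun z => (z, gradient φ z)) := by
    rw [((𝓝 x).basis_sets.prod_nhds (𝓝 G).basis_sets).mapClusterPt_iff_frequently]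
    rintro ⟨s, t⟩ ⟨hs, ht⟩
    exact ((mapClusterPt_iff_frequently.1 hG t ht).and_eventually hs).mono fun z hz => ⟨hz.2, hz.1⟩
  have hF : Continuous fun q : E × E => φ q.1 + ⟪q.2, y - q.1⟫ := by
    have := hd.continuous
    fun_prop
  exact isClosed_Iic.mem_of_mapClusterPt (hgraph.continuousAt_comp hF.continuousAt)
    (Eventually.of_forall fun z => hφ.add_inner_le_of_hasGradientAt (hd z).hasGradientAt y)

theorem continuous_gradient [ProperSpace E] (hφ : ConvexOn ℝ univ φ) (hd : Differentiable ℝ φ) :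
    Continuous (gradient φ) := by
  -- locally bounded, and every cluster point at `x` is a subgradient at `x`, hence `∇φ x`
  refine continuous_iff_continuousAt.2 fun x => ?_
  obtain ⟨B, hB⟩ := (isCompact_closedBall x 2).exists_bound_of_continuousOn
    hd.continuous.continuousOn
  have hbound : ∀ z ∈ Metric.closedBall x 1, gradient φ z ∈ Metric.closedBall 0 (2 * B) := by
    intro z hz
    rw [mem_closedBall_zero_iff]
    refine hφ.norm_le_of_hasGradientAt (hd z).hasGradientAt fun y hy => hB y ?_
    refine Metric.closedBall_subset_closedBall' ?_ hy
    rw [Metric.mem_closedBall] at hz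
    linarith
  exact (isCompact_closedBall 0 (2 * B)).tendsto_nhds_of_unique_mapClusterPt
    (eventually_of_mem (Metric.closedBall_mem_nhds x one_pos) hbound) fun G _ hG =>
      (hd x).hasGradientAt.eq_of_forall_add_inner_le (hφ.add_inner_le_of_mapClusterPt hd hG)

end ConvexOn

theorem antitoneOn_Ici_of_hasDerivAt_nonpos {W W' : ℝ → ℝ} {a : ℝ}
    (hW₀ : ContinuousWithinAt W (Ici a) a) (hW : ∀ s ∈ Ioi a, HasDerivAt W (W' s) s)
    (hW' : ∀ s ∈ Ioi a, W' s ≤ 0) : AntitoneOn W (Ici a) := by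
  refine antitoneOn_of_hasDerivWithinAt_nonpos (f' := W') (convex_Ici a) ?_ ?_ ?_
  · intro s hs
    rcases (mem_Ici.1 hs).eq_or_lt with rfl | has
    · exact hW₀
    · exact (hW s has).continuousAt.continuousWithinAt
  · simpa only [interior_Ici] using fun s hs => (hW s hs).hasDerivWithinAt
  · simpa only [interior_Ici] using hW'

section Bregman

variable {d : ℕ} {h : EuclideanSpace ℝ (Fin d) → ℝ} {x y : EuclideanSpace ℝ (Fin d)}

theorem breg_nonneg (hh : ConvexOn ℝ univ h) (hx : DifferentiableAt ℝ h x) : 0 ≤ breg d h y x := by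
  have := hh.add_inner_le_of_hasGradientAt hx.hasGradientAt y
  rw [breg]
  linarith

theorem continuous_breg (hh : ConvexOn ℝ univ h) (hd : Differentiable ℝ h) :
    Continuous (breg d h y) := by
  have := hd.continuous
  have := hh.continuous_gradient hd
  unfold breg
  fun_prop

theorem HasDerivAt.breg {Z : ℝ → EuclideanSpace ℝ (Fin d)} {Z' G' : EuclideanSpace ℝ (Fin d)}
    {s : ℝ} (hZ : HasDerivAt Z Z' s) (hh : DifferentiableAt ℝ h (Z s))
    (hG : HasDerivAt (fun u => gradient h (Z u)) G' s) :
    HasDerivAt (fun u => breg d h y (Z u)) (-⟪G', y - Z s⟫) s := by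
  have hhZ : HasDerivAt (fun u => h (Z u)) ⟪gradient h (Z s), Z'⟫ s :=
    hh.hasGradientAt.hasFDerivAt.comp_hasDerivAt s hZ
  have hpair := hG.inner ℝ (hZ.const_sub y)
  have := (hhZ.const_sub (h y)).fun_sub hpair
  rwa [inner_neg_right, sub_add_cancel_left] at this

end Bregman

section NesterovFlow

variable {d : ℕ} {p C : ℝ} {f h : EuclideanSpace ℝ (Fin d) → ℝ} {xstar : EuclideanSpace ℝ (Fin d)}
  {X Z : ℝ → EuclideanSpace ℝ (Fin d)}

def nesterovEnergy (d : ℕ) (p C : ℝ) (f h : EuclideanSpace ℝ (Fin d) → ℝ)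
    (xstar : EuclideanSpace ℝ (Fin d)) (X Z : ℝ → EuclideanSpace ℝ (Fin d)) (t : ℝ) : ℝ :=
  C * t ^ p * (f (X t) - f xstar) + breg d h xstar (Z t)

theorem hasDerivAt_nesterovEnergy {s : ℝ} {V : EuclideanSpace ℝ (Fin d)} (hp : p ≠ 0) (hs : 0 < s)
    (hX : HasDerivAt X V s) (hZ : DifferentiableAt ℝ Z s) (hZs : Z s = X s + (s / p) • V)
    (hf : DifferentiableAt ℝ f (X s)) (hh : DifferentiableAt ℝ h (Z s))
    (hflow : HasDerivAt (fun u => gradient h (Z u)) (-(C * p * s ^ (p - 1)) • gradient f (X s)) s) :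
    HasDerivAt (nesterovEnergy d p C f h xstar X Z)
      (C * p * s ^ (p - 1) * (f (X s) - f xstar + ⟪gradient f (X s), xstar - X s⟫)) s := by
  have hpow : HasDerivAt (fun u => C * u ^ p) (C * (p * s ^ (p - 1))) s :=
    (hasDerivAt_rpow_const (Or.inl hs.ne')).const_mul C
  have hfX : HasDerivAt (fun u => f (X u)) ⟪gradient f (X s), V⟫ s :=
    hf.hasGradientAt.hasFDerivAt.comp_hasDerivAt s hX
  have := (hpow.mul (hfX.sub_const (f xstar))).add (hZ.hasDerivAt.breg (y := xstar) hh hflow)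
  refine this.congr_deriv ?_
  -- the two `C s^p ⟪∇f(X s), V⟫` terms cancel because `Z s - X s = (s/p) • V`
  have hsp : s ^ (p - 1) * s = s ^ p := by
    rw [← rpow_add_one hs.ne', sub_add_cancel]
  rw [hZs, sub_add_eq_sub_sub, inner_sub_right, real_inner_smul_right, real_inner_smul_left,
    real_inner_smul_left, ← hsp]
  field_simp
  ring

theorem continuousWithinAt_nesterovEnergy (hp : 0 < p) (hf : Continuous f)
    (hh : ConvexOn ℝ univ h) (hd : Differentiable ℝ h) (hX : ContinuousWithinAt X (Ici 0) 0)
    (hZ : ContinuousWithinAt Z (Ici 0) 0) :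
    ContinuousWithinAt (nesterovEnergy d p C f h xstar X Z) (Ici 0) 0 := by
  have hpow : ContinuousWithinAt (fun t : ℝ => t ^ p) (Ici 0) 0 :=
    (continuousAt_rpow_const 0 p (Or.inr hp.le)).continuousWithinAt
  have hfX := hf.continuousAt.comp_continuousWithinAt hX
  have hbZ := (continuous_breg (y := xstar) hh hd).continuousAt.comp_continuousWithinAt hZ
  exact ((continuousWithinAt_const.mul hpow).mul (hfX.sub continuousWithinAt_const)).add hbZ

end NesterovFlow

theorem nesterov_flow_rate_general
    (d : ℕ) (p C : ℝ) (hp : 0 < p) (hC : 0 < C)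
    (f h : EuclideanSpace ℝ (Fin d) → ℝ)
    (hconv : ConvexOn ℝ Set.univ f) (hf : Differentiable ℝ f)
    (hhconv : ConvexOn ℝ Set.univ h) (hh : Differentiable ℝ h)
    (xstar : EuclideanSpace ℝ (Fin d))
    (X X' X'' Z : ℝ → EuclideanSpace ℝ (Fin d))
    (hXcont : ContinuousOn X (Set.Ici 0))
    (hX : ∀ t ∈ Set.Ioi (0 : ℝ), HasDerivAt X (X' t) t)
    (hX' : ∀ t ∈ Set.Ioi (0 : ℝ), HasDerivAt X' (X'' t) t)
    (hZ : ∀ t ∈ Set.Ioi (0 : ℝ), Z t = X t + (t / p) • X' t)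
    (hZ0 : Z 0 = X 0)
    (hZcont : ContinuousWithinAt Z (Set.Ici 0) 0)
    (hflow : ∀ t ∈ Set.Ioi (0 : ℝ),
      HasDerivAt (fun s => gradient h (Z s)) (-(C * p * t ^ (p - 1)) • gradient f (X t)) t) :
    ∀ t : ℝ, 0 < t → f (X t) - f xstar ≤ breg d h xstar (X 0) / (C * t ^ p) := by
  intro t ht
  have hZd : ∀ s ∈ Ioi (0 : ℝ), DifferentiableAt ℝ Z s := fun s hs =>
    (((hX s hs).differentiableAt.add
      ((differentiableAt_id.div_const p).smul (hX' s hs).differentiableAt))).congr_of_eventuallyEq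
      (eventually_of_mem (isOpen_Ioi.mem_nhds hs) hZ)
  have hanti : AntitoneOn (nesterovEnergy d p C f h xstar X Z) (Ici 0) := by
    refine antitoneOn_Ici_of_hasDerivAt_nonpos
      (continuousWithinAt_nesterovEnergy hp hf.continuous hhconv hh (hXcont 0 self_mem_Ici) hZcont)
      (fun s hs => hasDerivAt_nesterovEnergy hp.ne' hs (hX s hs) (hZd s hs) (hZ s hs) (hf _) (hh _)
        (hflow s hs)) fun s hs => ?_
    have hs : 0 < s := hs
    have hgrad := hconv.add_inner_le_of_hasGradientAt (hf (X s)).hasGradientAt xstar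
    exact mul_nonpos_of_nonneg_of_nonpos (by positivity) (by linarith)
  have hWt := hanti self_mem_Ici ht.le ht.le
  simp only [nesterovEnergy, zero_rpow hp.ne', hZ0, zero_mul, mul_zero, zero_add] at hWt
  have hD := breg_nonneg (y := xstar) hhconv (hh (Z t))
  rw [le_div_iff₀ (by positivity)]
  linarith

theorem nesterov_flow_rate
    (d : ℕ) (p C : ℝ) (hp : 0 < p) (hC : 0 < C)
    (f h : EuclideanSpace ℝ (Fin d) → ℝ)
    (hconv : ConvexOn ℝ Set.univ f) (hf : Differentiable ℝ f)
    (hhconv : ConvexOn ℝ Set.univ h) (hh : Differentiable ℝ h)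
    (xstar : EuclideanSpace ℝ (Fin d)) (hmin : ∀ x, f xstar ≤ f x)
    (X X' X'' Z : ℝ → EuclideanSpace ℝ (Fin d))
    (hXcont : ContinuousOn X (Set.Ici 0))
    (hX : ∀ t ∈ Set.Ioi (0 : ℝ), HasDerivAt X (X' t) t)
    (hX' : ∀ t ∈ Set.Ioi (0 : ℝ), HasDerivAt X' (X'' t) t)
    (hZ : ∀ t ∈ Set.Ioi (0 : ℝ), Z t = X t + (t / p) • X' t)
    (hZ0 : Z 0 = X 0)
    (hZcont : ContinuousWithinAt Z (Set.Ici 0) 0)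
    (hflow : ∀ t ∈ Set.Ioi (0 : ℝ),
      HasDerivAt (fun s => gradient h (Z s)) (-(C * p * t ^ (p - 1)) • gradient f (X t)) t) :
    ∀ t : ℝ, 0 < t → f (X t) - f xstar ≤ breg d h xstar (X 0) / (C * t ^ p) :=
  nesterov_flow_rate_general d p C hp hC f h hconv hf hhconv hh xstar X X' X'' Z hXcont hX hX' hZ
    hZ0 hZcont hflow
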